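/- Let M be an m×m complex matrix (m ≥ 1) and let ρ(M) be its spectral radius. Then lim sup_{n→∞} |tr(M^{n+1})|^{1/n} = ρ(M), where tr denotes the trace and the lim sup is taken over n ≥ 1. -/

import Mathlib

/-- The spectral radius of a square complex matrix: the maximal absolute value
of the roots in `ℂ` of its characteristic polynomial. -/
noncomputable def specRad {m : ℕ} (M : Matrix (Fin m) (Fin m) ℂ) : ℝ :=
  (((M.charpoly.roots.map fun z => ‖z‖₊).sup : NNReal) : ℝ)

/-!
Since `det (q(M)) = ∏ q(λ)` over the eigenvalues `λ` of `M` (with multiplicity), taking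
`q = x - X ^ k` shows that the eigenvalues of `M ^ k` are the `λ ^ k`, so `tr (M ^ k)` is the
power sum `p_k = ∑ λ ^ k`. The bound `‖p_k‖ ≤ m ρ ^ k` gives `≤`. For `≥`, group equal
eigenvalues: `p_(N+i) = ∑ⱼ mⱼ λⱼ ^ N λⱼ ^ i` with multiplicities `mⱼ ≥ 1`, so inverting the
Vandermonde matrix of the distinct eigenvalues shows that one of `p_N, …, p_(N+m-1)` has norm
at least `c ρ ^ N`, for a constant `c > 0` independent of `N`.
-/

open Polynomial

namespace Matrix

variable {n : Type*} [Fintype n] [DecidableEq n]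

theorem det_aeval_prod_X_sub_C {R : Type*} [CommRing R] (M : Matrix n n R) (t : Multiset R) :
    (aeval M (t.map (X - C ·)).prod).det = (t.map fun μ => (M - scalar n μ).det).prod := by
  induction t using Multiset.induction_on with
  | empty => simp
  | cons μ t ih =>
    simp only [Multiset.map_cons, Multiset.prod_cons, map_mul, det_mul, ih, map_sub, aeval_X,
      aeval_C]
    rfl

variable {K : Type*} [Field K] [IsAlgClosed K]

theorem card_roots_charpoly (M : Matrix n n K) :
    Multiset.card M.charpoly.roots = Fintype.card n := by
  rw [IsAlgClosed.card_roots_eq_natDegree, charpoly_natDegree_eq_dim]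

theorem det_sub_scalar_eq_prod_roots_charpoly (M : Matrix n n K) (μ : K) :
    (M - scalar n μ).det = (M.charpoly.roots.map (· - μ)).prod := by
  have h := (IsAlgClosed.splits (k := K) M.charpoly).eq_prod_roots_of_monic M.charpoly_monic
  rw [← neg_sub, det_neg, ← eval_charpoly]
  conv_lhs => rw [h]
  rw [eval_multiset_prod, Multiset.map_map, ← M.card_roots_charpoly,
    ← Multiset.card_map (eval μ ∘ (X - C ·)), ← Multiset.prod_map_neg, Multiset.map_map]
  simp [Function.comp_def]

theorem det_aeval_eq_prod_roots_charpoly (M : Matrix n n K) (q : K[X]) :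
    (aeval M q).det = (M.charpoly.roots.map q.eval).prod := by
  set a := q.leadingCoeff
  have hq : C a * (q.roots.map (X - C ·)).prod = q :=
    C_leadingCoeff_mul_prod_multiset_X_sub_C IsAlgClosed.card_roots_eq_natDegree
  have heval (z : K) : q.eval z = a * (q.roots.map (z - ·)).prod := by
    conv_lhs => rw [← hq]
    simp [eval_multiset_prod, Multiset.map_map]
  calc (aeval M q).det
      = a ^ Fintype.card n * (q.roots.map fun μ => (M - scalar n μ).det).prod := by
        conv_lhs => rw [← hq]
        rw [map_mul, det_mul, aeval_C, algebraMap_eq_diagonal, det_diagonal,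
          det_aeval_prod_X_sub_C]
        simp [Finset.prod_const]
    _ = (M.charpoly.roots.map q.eval).prod := by
        simp only [det_sub_scalar_eq_prod_roots_charpoly, heval, Multiset.prod_map_mul,
          Multiset.map_const', Multiset.prod_replicate, card_roots_charpoly]
        rw [Multiset.prod_map_prod_map]

theorem charpoly_pow_eq_prod_roots_charpoly (M : Matrix n n K) (k : ℕ) :
    (M ^ k).charpoly = ((M.charpoly.roots.map (· ^ k)).map (X - C ·)).prod := by
  refine Polynomial.funext fun x => ?_
  have h := M.det_aeval_eq_prod_roots_charpoly (C x - X ^ k)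
  simp only [map_sub, aeval_C, aeval_X_pow, eval_sub, eval_C, eval_pow, eval_X] at h
  rw [eval_charpoly, show scalar n x = algebraMap K (Matrix n n K) x from rfl, h,
    eval_multiset_prod]
  simp [Multiset.map_map]

theorem trace_pow_eq_sum_roots_charpoly (M : Matrix n n K) (k : ℕ) :
    (M ^ k).trace = (M.charpoly.roots.map (· ^ k)).sum := by
  rw [trace_eq_sum_roots_charpoly, charpoly_pow_eq_prod_roots_charpoly,
    roots_multiset_prod_X_sub_C]

end Matrix

open Filter Topology Matrix

theorem Matrix.exists_mul_norm_le_norm_vecMul_vandermonde {𝕜 : Type*}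
    [NontriviallyNormedField 𝕜] [CompleteSpace 𝕜] {d : ℕ}
    {v : Fin d → 𝕜} (hv : Function.Injective v) :
    ∃ c > 0, ∀ a : Fin d → 𝕜, c * ‖a‖ ≤ ‖a ᵥ* vandermonde v‖ := by
  have hinj : Function.Injective (vecMulLinear (vandermonde v)) :=
    vecMul_injective_iff_isUnit.mpr <| (isUnit_iff_isUnit_det _).mpr <|
      isUnit_iff_ne_zero.mpr <| det_vandermonde_ne_zero_iff.mpr hv
  obtain ⟨K, -, hK⟩ := (vecMulLinear (vandermonde v)).injective_iff_antilipschitz.mp hinj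
  exact antilipschitzWith_iff_exists_mul_le_norm.mp ⟨K, hK⟩

theorem Multiset.norm_sum_map_pow_le {R : Type*} [NormedDivisionRing R] {s : Multiset R} {r : ℝ}
    (hr : ∀ z ∈ s, ‖z‖ ≤ r) (k : ℕ) :
    ‖(s.map (· ^ k)).sum‖ ≤ card s * r ^ k := by
  calc ‖(s.map (· ^ k)).sum‖ ≤ ((s.map (· ^ k)).map (‖·‖)).sum := norm_multiset_sum_le _
    _ ≤ card ((s.map (· ^ k)).map (‖·‖)) • r ^ k := by
        refine sum_le_card_nsmul _ _ fun x hx => ?_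
        obtain ⟨z, hz, rfl⟩ := by simpa using hx
        exact pow_le_pow_left₀ (norm_nonneg z) (hr z hz) k
    _ = card s * r ^ k := by simp

theorem Multiset.sum_map_pow_eq_sum_count_mul_pow {R : Type*} [CommSemiring R] [DecidableEq R]
    (s : Multiset R) {d : ℕ} (e : Fin d ≃ s.toFinset) (k : ℕ) :
    (s.map (· ^ k)).sum = ∑ j, s.count (e j : R) * (e j : R) ^ k := by
  rw [Finset.sum_multiset_map_count, ← Finset.sum_coe_sort, ← e.sum_comp]
  simp [nsmul_eq_mul]

variable {𝕜 : Type*} [RCLike 𝕜]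

theorem Multiset.exists_mul_pow_le_norm_sum_map_pow_add {s : Multiset 𝕜} {z : 𝕜} (hz : z ∈ s) :
    ∃ c > 0, ∀ N, ∃ i < card s, c * ‖z‖ ^ N ≤ ‖(s.map (· ^ (N + i))).sum‖ := by
  classical
  set e := s.toFinset.equivFin.symm
  set v : Fin s.toFinset.card → 𝕜 := fun j => e j
  obtain ⟨c, hc, hV⟩ := Matrix.exists_mul_norm_le_norm_vecMul_vandermonde (v := v)
    (Subtype.val_injective.comp e.injective)
  refine ⟨c, hc, fun N => ?_⟩
  set a : Fin s.toFinset.card → 𝕜 := fun j => s.count (v j) * v j ^ N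
  have hsum (i : Fin s.toFinset.card) :
      (a ᵥ* vandermonde v) i = (s.map (· ^ (N + i))).sum := by
    rw [s.sum_map_pow_eq_sum_count_mul_pow e]
    simp [vecMul, dotProduct, a, v, pow_add, mul_assoc]
  have hz_le : ‖z‖ ^ N ≤ ‖a‖ := by
    obtain ⟨j, hj⟩ := e.surjective ⟨z, Multiset.mem_toFinset.mpr hz⟩
    have hvj : v j = z := by simp [v, hj]
    calc ‖z‖ ^ N ≤ s.count z * ‖z‖ ^ N :=
          le_mul_of_one_le_left (by positivity) (by exact_mod_cast Multiset.count_pos.mpr hz)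
      _ = ‖a j‖ := by simp [a, hvj]
      _ ≤ ‖a‖ := norm_le_pi_norm a j
  have : Nonempty (Fin s.toFinset.card) := e.symm.nonempty_congr.mp ⟨⟨z, by simpa using hz⟩⟩
  obtain ⟨i, hi⟩ := (IsGreatest.pi_norm (a ᵥ* vandermonde v)).1
  refine ⟨i, i.2.trans_le (Multiset.toFinset_card_le s), ?_⟩
  calc c * ‖z‖ ^ N ≤ c * ‖a‖ := by gcongr
    _ ≤ ‖a ᵥ* vandermonde v‖ := hV a
    _ = ‖(s.map (· ^ (N + i))).sum‖ := by rw [← hi, ← hsum]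

theorem Multiset.exists_frequently_mul_pow_le_norm_sum_map_pow {s : Multiset 𝕜} {z : 𝕜}
    (hz : z ∈ s) : ∃ c > 0, ∃ᶠ k in atTop, c * ‖z‖ ^ k ≤ ‖(s.map (· ^ k)).sum‖ := by
  obtain ⟨c, hc, h⟩ := exists_mul_pow_le_norm_sum_map_pow_add hz
  set B := (1 + ‖z‖) ^ card s
  have hB : 0 < B := by positivity
  refine ⟨c / B, div_pos hc hB, frequently_atTop.mpr fun N => ?_⟩
  obtain ⟨i, hi, hN⟩ := h N
  refine ⟨N + i, N.le_add_right i, ?_⟩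
  have hzi : ‖z‖ ^ i ≤ B := calc
    ‖z‖ ^ i ≤ (1 + ‖z‖) ^ i := by gcongr; linarith
    _ ≤ B := pow_le_pow_right₀ (by linarith [norm_nonneg z]) hi.le
  calc c / B * ‖z‖ ^ (N + i) = c * ‖z‖ ^ N * (‖z‖ ^ i / B) := by ring
    _ ≤ c * ‖z‖ ^ N * 1 := by gcongr; exact div_le_one_of_le₀ hzi hB.le
    _ ≤ _ := by rwa [mul_one]

theorem Real.tendsto_mul_pow_succ_rpow_one_div {c r : ℝ} (hc : 0 < c) (hr : 0 ≤ r) :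
    Tendsto (fun n : ℕ => (c * r ^ (n + 1)) ^ ((1 : ℝ) / n)) atTop (𝓝 r) := by
  have hinv : Tendsto (fun n : ℕ => (1 : ℝ) / n) atTop (𝓝 0) := tendsto_one_div_atTop_nhds_zero_nat
  have hlim : Tendsto (fun n : ℕ => c ^ ((1 : ℝ) / n) * r ^ (1 + (1 : ℝ) / n)) atTop
      (𝓝 (c ^ (0 : ℝ) * r ^ (1 + 0 : ℝ))) :=
    (tendsto_const_nhds.rpow hinv (.inl hc.ne')).mul
      (tendsto_const_nhds.rpow (tendsto_const_nhds.add hinv) (.inr (by norm_num)))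
  rw [rpow_zero, add_zero, rpow_one, one_mul] at hlim
  refine hlim.congr' ((eventually_ne_atTop 0).mono fun n hn => ?_)
  dsimp only
  rw [mul_rpow hc.le (by positivity), ← rpow_natCast, ← rpow_mul hr]
  congr 2
  field_simp
  push_cast
  ring

theorem Multiset.limsup_norm_sum_map_pow_succ_rpow_one_div (s : Multiset 𝕜) :
    limsup (fun n : ℕ => ‖(s.map (· ^ (n + 1))).sum‖ ^ ((1 : ℝ) / n)) atTop =
      ((s.map (‖·‖₊)).sup : ℝ) := by
  set ρ : ℝ := ((s.map (‖·‖₊)).sup : ℝ)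
  set f := fun n : ℕ => ‖(s.map (· ^ (n + 1))).sum‖ ^ ((1 : ℝ) / n)
  have hρ : ∀ z ∈ s, ‖z‖ ≤ ρ := fun z hz =>
    NNReal.coe_le_coe.mpr (Multiset.le_sup (Multiset.mem_map_of_mem (‖·‖₊) hz))
  have hupper := Real.tendsto_mul_pow_succ_rpow_one_div (c := card s + 1) (by positivity)
    (NNReal.coe_nonneg _ : 0 ≤ ρ)
  have hf_le (n : ℕ) : f n ≤ ((card s + 1) * ρ ^ (n + 1)) ^ ((1 : ℝ) / n) := by
    refine Real.rpow_le_rpow (norm_nonneg _) ?_ (by positivity)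
    exact (norm_sum_map_pow_le hρ _).trans (by gcongr; linarith)
  have hf_bdd : IsBoundedUnder (· ≤ ·) atTop f :=
    hupper.isBoundedUnder_le.mono_le (.of_forall hf_le)
  obtain ⟨g, hg, hgf⟩ : ∃ g : ℕ → ℝ, Tendsto g atTop (𝓝 ρ) ∧ ∃ᶠ n in atTop, g n ≤ f n := by
    by_cases hs : s = 0
    · exact ⟨fun _ => 0, by simp [ρ, hs], .of_forall fun n => Real.rpow_nonneg (norm_nonneg _) _⟩
    obtain ⟨y, hy, hmax⟩ := Multiset.exists_max_image (‖·‖₊) hs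
    have hyρ : ‖y‖ = ρ := le_antisymm (hρ y hy) <| NNReal.coe_le_coe.mpr
      (Multiset.sup_le.mpr (by simpa using hmax) : (s.map (‖·‖₊)).sup ≤ ‖y‖₊)
    obtain ⟨c, hc, hfreq⟩ := exists_frequently_mul_pow_le_norm_sum_map_pow hy
    rw [← map_add_atTop_eq_nat 1, frequently_map] at hfreq
    refine ⟨_, Real.tendsto_mul_pow_succ_rpow_one_div hc (hyρ ▸ norm_nonneg y),
      hfreq.mono fun n hn => ?_⟩
    rw [← hyρ]
    exact Real.rpow_le_rpow (by positivity) hn (by positivity)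
  refine le_antisymm ?_ ?_
  · calc limsup f atTop ≤ limsup _ atTop := limsup_le_limsup (.of_forall hf_le)
          (isCoboundedUnder_le_of_le atTop fun n => Real.rpow_nonneg (norm_nonneg _) _)
          hupper.isBoundedUnder_le
      _ = ρ := hupper.limsup_eq
  · calc ρ = liminf g atTop := hg.liminf_eq.symm
      _ ≤ limsup f atTop := liminf_le_limsup_of_frequently_le hgf hg.isBoundedUnder_ge hf_bdd

theorem limsup_abs_trace_pow_succ_rpow_eq_spectralRadius_general
    {m : ℕ} (M : Matrix (Fin m) (Fin m) ℂ) :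
    Filter.limsup
      (fun n : ℕ => ‖Matrix.trace (M ^ (n + 1))‖ ^ ((1 : ℝ) / n))
      Filter.atTop = specRad M := by
  simp only [Matrix.trace_pow_eq_sum_roots_charpoly]
  exact M.charpoly.roots.limsup_norm_sum_map_pow_succ_rpow_one_div

/-- `limsup |tr(M^{n+1})|^{1/n} = ρ(M)`. -/
theorem limsup_abs_trace_pow_succ_rpow_eq_spectralRadius
    {m : ℕ} (hm : 1 ≤ m) (M : Matrix (Fin m) (Fin m) ℂ) :
    Filter.limsup
      (fun n : ℕ => ‖Matrix.trace (M ^ (n + 1))‖ ^ ((1 : ℝ) / n))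
      Filter.atTop = specRad M :=
  limsup_abs_trace_pow_succ_rpow_eq_spectralRadius_general M
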